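/- Let g_c : ℝ → ℝ be a density generator and Z_{g_c} := π ∫₀^∞ g_c(u) du. If (Z₁, Z₂) has joint density h(z₁,z₂) = g_c(z₁² + z₂²)/Z_{g_c}, then for every x ≥ 0, P(Z₁² + Z₂² ≤ x) = (π/Z_{g_c}) ∫₀^x g_c(u) du; that is, Z₁² + Z₂² has probability density u ↦ π g_c(u)/Z_{g_c} on (0,∞). Consequently, if (T₁,T₂) has the BLS(η₁,η₂,σ₁,σ₂,ρ; g_c) density, then the squared Mahalanobis distance (T̃₁² − 2ρ T̃₁ T̃₂ + T̃₂²)/(1−ρ²), where T̃ᵢ = (log Tᵢ − log ηᵢ)/σᵢ, has probability density u ↦ π g_c(u)/Z_{g_c} on (0,∞). -/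

import Mathlib

open MeasureTheory Real Set

/-- Standardized log-transform `t̃ = (log t − log η)/σ`. -/
noncomputable def logStd (η σ t : ℝ) : ℝ := (Real.log t - Real.log η) / σ

/-- The bivariate log-symmetric density `BLS(η₁,η₂,σ₁,σ₂,ρ; g)` with partition function
`Z_g = π ∫₀^∞ g`. -/
noncomputable def blsDensity (g : ℝ → ℝ) (η₁ η₂ σ₁ σ₂ ρ : ℝ) (t : ℝ × ℝ) : ℝ :=
  if 0 < t.1 ∧ 0 < t.2 then
    g ((logStd η₁ σ₁ t.1 ^ 2 - 2 * ρ * logStd η₁ σ₁ t.1 * logStd η₂ σ₂ t.2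
        + logStd η₂ σ₂ t.2 ^ 2) / (1 - ρ ^ 2)) /
      (t.1 * t.2 * σ₁ * σ₂ * Real.sqrt (1 - ρ ^ 2) * (π * ∫ u in Ioi (0 : ℝ), g u))
  else 0

/-- The squared Mahalanobis distance of `(t₁,t₂)` for `BLS(η₁,η₂,σ₁,σ₂,ρ)`. -/
noncomputable def mahalanobisSq (η₁ η₂ σ₁ σ₂ ρ t₁ t₂ : ℝ) : ℝ :=
  (logStd η₁ σ₁ t₁ ^ 2 - 2 * ρ * logStd η₁ σ₁ t₁ * logStd η₂ σ₂ t₂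
    + logStd η₂ σ₂ t₂ ^ 2) / (1 - ρ ^ 2)

open Function
open scoped ENNReal

/-!
Substituting `t = blsCoord z`, i.e. `t̃₂ = z₂` and `t̃₁ = √(1 - ρ²) z₁ + ρ z₂`, maps `ℝ²`
diffeomorphically onto the positive quadrant, turns the squared Mahalanobis distance into
`z₁² + z₂²`, and has Jacobian `t₁ t₂ σ₁ σ₂ √(1 - ρ²)`, which cancels the prefactor of the BLS
density. Hence the Mahalanobis distance of `T` has the law of `Z₁² + Z₂²` for the spherical
density `g (z₁² + z₂²) / Z_g`. In polar coordinates `dz = r dr dθ = ½ du dθ` with `u = r²`, so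
the pushforward of that density under `z ↦ z₁² + z₂²` is `π g(u) / Z_g` on `(0, ∞)`.
-/

lemma image_sq_Ioi_zero : (fun r : ℝ => r ^ 2) '' Ioi 0 = Ioi 0 := by
  ext u
  refine ⟨?_, fun hu => ⟨√u, sqrt_pos.2 hu, sq_sqrt (le_of_lt hu)⟩⟩
  rintro ⟨r, hr, rfl⟩
  exact pow_pos (mem_Ioi.1 hr) 2

lemma two_mul_lintegral_Ioi_mul_comp_sq (F : ℝ → ℝ≥0∞) :
    2 * ∫⁻ r in Ioi 0, ENNReal.ofReal r * F (r ^ 2) = ∫⁻ u in Ioi 0, F u := by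
  have h := lintegral_image_eq_lintegral_deriv_mul_of_monotoneOn measurableSet_Ioi
    (fun r _ => (hasDerivAt_pow 2 r).hasDerivWithinAt)
    (fun a ha b _ hab => pow_le_pow_left₀ (le_of_lt ha) hab 2) F
  rw [image_sq_Ioi_zero] at h
  rw [h, ← lintegral_const_mul' _ _ ENNReal.ofNat_ne_top]
  refine setLIntegral_congr_fun measurableSet_Ioi fun r hr => ?_
  rw [← mul_assoc, ← ENNReal.ofReal_ofNat 2, ← ENNReal.ofReal_mul zero_le_two]
  norm_num

lemma lintegral_comp_sq_add_sq {F : ℝ → ℝ≥0∞} (hF : Measurable F) :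
    ∫⁻ z : ℝ × ℝ, F (z.1 ^ 2 + z.2 ^ 2) = ENNReal.ofReal π * ∫⁻ u in Ioi 0, F u := by
  have hpolar : ∀ p : ℝ × ℝ, (polarCoord.symm p).1 ^ 2 + (polarCoord.symm p).2 ^ 2 = p.1 ^ 2 := by
    intro p
    simp only [polarCoord_symm_apply]
    linear_combination p.1 ^ 2 * sin_sq_add_cos_sq p.2
  rw [← lintegral_comp_polarCoord_symm]
  simp only [hpolar, smul_eq_mul, polarCoord_target, Measure.volume_eq_prod,
    ← Measure.prod_restrict]
  rw [lintegral_prod _ (by fun_prop)]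
  simp only [lintegral_const, Measure.restrict_apply MeasurableSet.univ, univ_inter, volume_Ioo]
  rw [lintegral_mul_const _ (by fun_prop), ← two_mul_lintegral_Ioi_mul_comp_sq F, sub_neg_eq_add,
    ← two_mul, ENNReal.ofReal_mul zero_le_two, ENNReal.ofReal_ofNat]
  ring

lemma map_sq_add_sq_withDensity {G : ℝ → ℝ≥0∞} (hG : Measurable G) :
    (volume.withDensity fun z : ℝ × ℝ => G (z.1 ^ 2 + z.2 ^ 2)).map (fun z => z.1 ^ 2 + z.2 ^ 2)
      = volume.withDensity ((Ioi 0).indicator fun u => ENNReal.ofReal π * G u) := by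
  set q : ℝ × ℝ → ℝ := fun z => z.1 ^ 2 + z.2 ^ 2
  have hq : Measurable q := by fun_prop
  ext s hs
  have hind : ∀ z, (q ⁻¹' s).indicator (fun z => G (q z)) z = s.indicator G (q z) :=
    fun _ => indicator_comp_right _
  rw [Measure.map_apply hq hs, withDensity_apply _ (hq hs), withDensity_apply _ hs,
    ← lintegral_indicator (hq hs), ← lintegral_indicator hs, lintegral_congr hind,
    lintegral_comp_sq_add_sq (hG.indicator hs), ← lintegral_const_mul _ (hG.indicator hs),
    ← lintegral_indicator measurableSet_Ioi]
  simp_rw [← indicator_const_mul, indicator_indicator, inter_comm]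

lemma map_sq_add_sq_withDensity_ofReal_div {g : ℝ → ℝ} (hg : Measurable g) (c : ℝ) :
    (volume.withDensity fun z : ℝ × ℝ => ENNReal.ofReal (g (z.1 ^ 2 + z.2 ^ 2) / c)).map
        (fun z => z.1 ^ 2 + z.2 ^ 2)
      = volume.withDensity fun u => ENNReal.ofReal (if 0 < u then π * g u / c else 0) := by
  rw [map_sq_add_sq_withDensity (hg.div_const c).ennreal_ofReal]
  congr 1
  funext u
  by_cases hu : 0 < u <;> simp [hu, ← ENNReal.ofReal_mul pi_pos.le, mul_div_assoc]

lemma withDensity_ofReal_ite_pos_Iic {f : ℝ → ℝ} {x : ℝ} (hx : 0 ≤ x)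
    (hf : IntegrableOn f (Ioc 0 x)) (hf₀ : ∀ u, 0 ≤ f u) :
    volume.withDensity (fun u => ENNReal.ofReal (if 0 < u then f u else 0)) (Iic x)
      = ENNReal.ofReal (∫ u in 0..x, f u) := by
  have hind : (fun u => ENNReal.ofReal (if 0 < u then f u else 0))
      = (Ioi 0).indicator fun u => ENNReal.ofReal (f u) := by
    funext u
    by_cases hu : 0 < u <;> simp [hu]
  rw [withDensity_apply _ measurableSet_Iic, hind, lintegral_indicator measurableSet_Ioi,
    Measure.restrict_restrict measurableSet_Ioi, Ioi_inter_Iic, intervalIntegral.integral_of_le hx,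
    ofReal_integral_eq_lintegral_ofReal hf (ae_of_all _ hf₀)]

lemma withDensity_eq_map_withDensity_abs_det_mul {E : Type*} [NormedAddCommGroup E]
    [NormedSpace ℝ E] [FiniteDimensional ℝ E] [MeasurableSpace E] [BorelSpace E]
    (μ : Measure E) [μ.IsAddHaarMeasure] {Φ : E → E} {Φ' : E → E →L[ℝ] E}
    (hΦ' : ∀ z, HasFDerivAt Φ (Φ' z) z) (hΦ : Injective Φ) {f : E → ℝ≥0∞}
    (hf : support f ⊆ range Φ) :
    μ.withDensity f = (μ.withDensity fun z => ENNReal.ofReal |(Φ' z).det| * f (Φ z)).map Φ := by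
  have hΦ'' : ∀ z ∈ univ, HasFDerivWithinAt Φ (Φ' z) univ z :=
    fun z _ => (hΦ' z).hasFDerivWithinAt
  have hmeas : Measurable Φ :=
    (continuous_iff_continuousAt.2 fun z => (hΦ' z).continuousAt).measurable
  have hrange : MeasurableSet (range Φ) := by
    simpa using measurable_image_of_fderivWithin MeasurableSet.univ hΦ'' hΦ.injOn
  ext s hs
  rw [Measure.map_apply hmeas hs, withDensity_apply _ (hmeas hs), withDensity_apply _ hs,
    ← lintegral_image_eq_lintegral_abs_det_fderiv_mul μ (hmeas hs)
      (fun z _ => (hΦ' z).hasFDerivWithinAt) hΦ.injOn,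
    image_preimage_eq_inter_range, inter_comm, ← Measure.restrict_restrict hrange,
    setLIntegral_eq_of_support_subset hf]

theorem ContinuousLinearMap.det_smul_fst_add_smul_snd_prod (a b c d : ℝ) :
    ((a • fst ℝ ℝ ℝ + b • snd ℝ ℝ ℝ).prod (c • fst ℝ ℝ ℝ + d • snd ℝ ℝ ℝ)).det
      = a * d - b * c := by
  rw [det, ← LinearMap.det_toMatrix (Module.Basis.finTwoProd ℝ), Matrix.det_fin_two]
  simp [LinearMap.toMatrix_apply]

lemma logStd_mul_exp {η σ : ℝ} (hη : 0 < η) (hσ : σ ≠ 0) (y : ℝ) :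
    logStd η σ (η * exp (σ * y)) = y := by
  rw [logStd, log_mul hη.ne' (exp_pos _).ne', log_exp]
  field_simp
  ring

lemma mul_exp_mul_logStd {η σ t : ℝ} (hη : 0 < η) (hσ : σ ≠ 0) (ht : 0 < t) :
    η * exp (σ * logStd η σ t) = t := by
  rw [logStd, mul_div_cancel₀ _ hσ, exp_sub, exp_log ht, exp_log hη]
  field_simp

noncomputable def blsCoord (η₁ η₂ σ₁ σ₂ ρ : ℝ) (z : ℝ × ℝ) : ℝ × ℝ :=
  (η₁ * exp (σ₁ * (√(1 - ρ ^ 2) * z.1 + ρ * z.2)), η₂ * exp (σ₂ * z.2))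

section blsCoord

variable {η₁ η₂ σ₁ σ₂ ρ : ℝ}

lemma one_sub_sq_pos_of_mem_Ioo (hρ : ρ ∈ Ioo (-1 : ℝ) 1) : 0 < 1 - ρ ^ 2 := by
  nlinarith [hρ.1, hρ.2]

lemma mahalanobisSq_blsCoord (hη₁ : 0 < η₁) (hη₂ : 0 < η₂) (hσ₁ : 0 < σ₁) (hσ₂ : 0 < σ₂)
    (hρ : ρ ∈ Ioo (-1 : ℝ) 1) (z : ℝ × ℝ) :
    mahalanobisSq η₁ η₂ σ₁ σ₂ ρ (blsCoord η₁ η₂ σ₁ σ₂ ρ z).1 (blsCoord η₁ η₂ σ₁ σ₂ ρ z).2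
      = z.1 ^ 2 + z.2 ^ 2 := by
  have hρ' := one_sub_sq_pos_of_mem_Ioo hρ
  rw [mahalanobisSq, blsCoord, logStd_mul_exp hη₁ hσ₁.ne', logStd_mul_exp hη₂ hσ₂.ne',
    div_eq_iff hρ'.ne']
  linear_combination z.1 ^ 2 * sq_sqrt hρ'.le

lemma blsCoord_injective (hη₁ : 0 < η₁) (hη₂ : 0 < η₂) (hσ₁ : 0 < σ₁) (hσ₂ : 0 < σ₂)
    (hρ : ρ ∈ Ioo (-1 : ℝ) 1) : Injective (blsCoord η₁ η₂ σ₁ σ₂ ρ) := by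
  intro z w h
  have h₁ := congrArg (fun t => logStd η₁ σ₁ t.1) h
  have h₂ := congrArg (fun t => logStd η₂ σ₂ t.2) h
  simp only [blsCoord, logStd_mul_exp hη₁ hσ₁.ne', logStd_mul_exp hη₂ hσ₂.ne'] at h₁ h₂
  rw [h₂, add_left_inj] at h₁
  exact Prod.ext (mul_left_cancel₀ (sqrt_pos.2 (one_sub_sq_pos_of_mem_Ioo hρ)).ne' h₁) h₂

lemma Ioi_prod_Ioi_subset_range_blsCoord (hη₁ : 0 < η₁) (hη₂ : 0 < η₂) (hσ₁ : 0 < σ₁)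
    (hσ₂ : 0 < σ₂) (hρ : ρ ∈ Ioo (-1 : ℝ) 1) :
    Ioi 0 ×ˢ Ioi 0 ⊆ range (blsCoord η₁ η₂ σ₁ σ₂ ρ) := by
  rintro t ⟨ht₁, ht₂⟩
  have hs := (sqrt_pos.2 (one_sub_sq_pos_of_mem_Ioo hρ)).ne'
  refine ⟨((logStd η₁ σ₁ t.1 - ρ * logStd η₂ σ₂ t.2) / √(1 - ρ ^ 2), logStd η₂ σ₂ t.2), ?_⟩
  rw [blsCoord, mul_div_cancel₀ _ hs, sub_add_cancel, mul_exp_mul_logStd hη₁ hσ₁.ne' ht₁,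
    mul_exp_mul_logStd hη₂ hσ₂.ne' ht₂]

lemma hasFDerivAt_blsCoord (z : ℝ × ℝ) :
    HasFDerivAt (blsCoord η₁ η₂ σ₁ σ₂ ρ)
      ((((blsCoord η₁ η₂ σ₁ σ₂ ρ z).1 * (σ₁ * √(1 - ρ ^ 2))) • ContinuousLinearMap.fst ℝ ℝ ℝ
          + ((blsCoord η₁ η₂ σ₁ σ₂ ρ z).1 * (σ₁ * ρ)) • ContinuousLinearMap.snd ℝ ℝ ℝ).prod
        ((0 : ℝ) • ContinuousLinearMap.fst ℝ ℝ ℝ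
          + ((blsCoord η₁ η₂ σ₁ σ₂ ρ z).2 * σ₂) • ContinuousLinearMap.snd ℝ ℝ ℝ)) z := by
  have hfst : HasFDerivAt (fun z : ℝ × ℝ => z.1) (ContinuousLinearMap.fst ℝ ℝ ℝ) z :=
    hasFDerivAt_fst
  have hsnd : HasFDerivAt (fun z : ℝ × ℝ => z.2) (ContinuousLinearMap.snd ℝ ℝ ℝ) z :=
    hasFDerivAt_snd
  have h₁ := (((hfst.const_mul √(1 - ρ ^ 2)).add (hsnd.const_mul ρ)).const_mul σ₁).exp.const_mul η₁
  have h₂ := ((hsnd.const_mul σ₂).exp.const_mul η₂)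
  refine (h₁.prodMk h₂).congr_fderiv ?_
  ext <;> simp [blsCoord] <;> ring

lemma blsDensity_of_pos (g : ℝ → ℝ) {t : ℝ × ℝ} (ht : 0 < t.1 ∧ 0 < t.2) :
    blsDensity g η₁ η₂ σ₁ σ₂ ρ t
      = g (mahalanobisSq η₁ η₂ σ₁ σ₂ ρ t.1 t.2)
          / (t.1 * t.2 * σ₁ * σ₂ * √(1 - ρ ^ 2) * (π * ∫ u in Ioi (0 : ℝ), g u)) := by
  rw [blsDensity, if_pos ht, mahalanobisSq]

theorem withDensity_blsDensity (g : ℝ → ℝ) (hη₁ : 0 < η₁) (hη₂ : 0 < η₂) (hσ₁ : 0 < σ₁)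
    (hσ₂ : 0 < σ₂) (hρ : ρ ∈ Ioo (-1 : ℝ) 1) :
    volume.withDensity (fun t => ENNReal.ofReal (blsDensity g η₁ η₂ σ₁ σ₂ ρ t))
      = (volume.withDensity fun z : ℝ × ℝ =>
          ENNReal.ofReal (g (z.1 ^ 2 + z.2 ^ 2) / (π * ∫ u in Ioi (0 : ℝ), g u))).map
        (blsCoord η₁ η₂ σ₁ σ₂ ρ) := by
  rw [withDensity_eq_map_withDensity_abs_det_mul volume hasFDerivAt_blsCoord
    (blsCoord_injective hη₁ hη₂ hσ₁ hσ₂ hρ)]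
  · congr 2
    funext z
    set t := blsCoord η₁ η₂ σ₁ σ₂ ρ z
    have ht : 0 < t.1 ∧ 0 < t.2 := ⟨mul_pos hη₁ (exp_pos _), mul_pos hη₂ (exp_pos _)⟩
    have hD : 0 < t.1 * t.2 * σ₁ * σ₂ * √(1 - ρ ^ 2) :=
      mul_pos (mul_pos (mul_pos (mul_pos ht.1 ht.2) hσ₁) hσ₂)
        (sqrt_pos.2 (one_sub_sq_pos_of_mem_Ioo hρ))
    rw [ContinuousLinearMap.det_smul_fst_add_smul_snd_prod, ← ENNReal.ofReal_mul (abs_nonneg _),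
      blsDensity_of_pos g ht, mahalanobisSq_blsCoord hη₁ hη₂ hσ₁ hσ₂ hρ,
      show t.1 * (σ₁ * √(1 - ρ ^ 2)) * (t.2 * σ₂) - t.1 * (σ₁ * ρ) * 0
        = t.1 * t.2 * σ₁ * σ₂ * √(1 - ρ ^ 2) by ring,
      abs_of_pos hD, mul_div_assoc', mul_div_mul_left _ _ hD.ne']
  · intro t ht
    refine Ioi_prod_Ioi_subset_range_blsCoord hη₁ hη₂ hσ₁ hσ₂ hρ ?_
    by_contra hpos
    exact ht (by simp [blsDensity, if_neg (show ¬(0 < t.1 ∧ 0 < t.2) from hpos)])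

lemma measurable_mahalanobisSq :
    Measurable fun t : ℝ × ℝ => mahalanobisSq η₁ η₂ σ₁ σ₂ ρ t.1 t.2 := by
  unfold mahalanobisSq logStd
  fun_prop

lemma map_mahalanobisSq_withDensity_blsDensity (g : ℝ → ℝ) (hη₁ : 0 < η₁) (hη₂ : 0 < η₂)
    (hσ₁ : 0 < σ₁) (hσ₂ : 0 < σ₂) (hρ : ρ ∈ Ioo (-1 : ℝ) 1) :
    (volume.withDensity fun t => ENNReal.ofReal (blsDensity g η₁ η₂ σ₁ σ₂ ρ t)).map
        (fun t => mahalanobisSq η₁ η₂ σ₁ σ₂ ρ t.1 t.2)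
      = (volume.withDensity fun z : ℝ × ℝ =>
          ENNReal.ofReal (g (z.1 ^ 2 + z.2 ^ 2) / (π * ∫ u in Ioi (0 : ℝ), g u))).map
        (fun z => z.1 ^ 2 + z.2 ^ 2) := by
  have hΦ : Measurable (blsCoord η₁ η₂ σ₁ σ₂ ρ) := by
    unfold blsCoord
    fun_prop
  rw [withDensity_blsDensity g hη₁ hη₂ hσ₁ hσ₂ hρ, Measure.map_map measurable_mahalanobisSq hΦ]
  congr 1
  exact funext (mahalanobisSq_blsCoord hη₁ hη₂ hσ₁ hσ₂ hρ)

end blsCoord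

theorem mahalanobis_density_general
    {Ω : Type*} [MeasurableSpace Ω] (P : Measure Ω)
    (g : ℝ → ℝ) (hg_meas : Measurable g) (hg_nonneg : ∀ x, 0 ≤ g x)
    (hg_int : IntegrableOn g (Ioi 0))
    (Z₁ Z₂ : Ω → ℝ) (hZ₁ : Measurable Z₁) (hZ₂ : Measurable Z₂)
    (hjoint : Measure.map (fun ω => (Z₁ ω, Z₂ ω)) P
      = (volume : Measure (ℝ × ℝ)).withDensity
          (fun z => ENNReal.ofReal
            (g (z.1 ^ 2 + z.2 ^ 2) / (π * ∫ u in Ioi (0 : ℝ), g u))))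
    (η₁ η₂ σ₁ σ₂ ρ : ℝ) (hη₁ : 0 < η₁) (hη₂ : 0 < η₂) (hσ₁ : 0 < σ₁) (hσ₂ : 0 < σ₂)
    (hρ : ρ ∈ Ioo (-1 : ℝ) 1)
    (T₁ T₂ : Ω → ℝ) (hT₁ : Measurable T₁) (hT₂ : Measurable T₂)
    (hT : Measure.map (fun ω => (T₁ ω, T₂ ω)) P
      = (volume : Measure (ℝ × ℝ)).withDensity
          (fun t => ENNReal.ofReal (blsDensity g η₁ η₂ σ₁ σ₂ ρ t))) :
    (∀ x : ℝ, 0 ≤ x →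
        P {ω | Z₁ ω ^ 2 + Z₂ ω ^ 2 ≤ x}
          = ENNReal.ofReal ((π / (π * ∫ u in Ioi (0 : ℝ), g u)) *
              ∫ u in (0 : ℝ)..x, g u)) ∧
    (Measure.map (fun ω => Z₁ ω ^ 2 + Z₂ ω ^ 2) P
      = volume.withDensity (fun u => ENNReal.ofReal
          (if 0 < u then π * g u / (π * ∫ u in Ioi (0 : ℝ), g u) else 0))) ∧
    (Measure.map (fun ω => mahalanobisSq η₁ η₂ σ₁ σ₂ ρ (T₁ ω) (T₂ ω)) P
      = volume.withDensity (fun u => ENNReal.ofReal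
          (if 0 < u then π * g u / (π * ∫ u in Ioi (0 : ℝ), g u) else 0))) := by
  set Zg := π * ∫ u in Ioi (0 : ℝ), g u
  have hlawZ : P.map (fun ω => Z₁ ω ^ 2 + Z₂ ω ^ 2)
      = volume.withDensity fun u => ENNReal.ofReal (if 0 < u then π * g u / Zg else 0) := by
    rw [← map_sq_add_sq_withDensity_ofReal_div hg_meas, ← hjoint,
      Measure.map_map (by fun_prop) (hZ₁.prodMk hZ₂)]
    rfl
  refine ⟨fun x hx => ?_, hlawZ, ?_⟩
  · have hZg : 0 ≤ Zg :=
      mul_nonneg pi_pos.le (setIntegral_nonneg measurableSet_Ioi fun u _ => hg_nonneg u)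
    refine (Measure.map_apply (by fun_prop : Measurable fun ω => Z₁ ω ^ 2 + Z₂ ω ^ 2)
      measurableSet_Iic).symm.trans ?_
    rw [hlawZ, withDensity_ofReal_ite_pos_Iic hx
        (((hg_int.mono_set Ioc_subset_Ioi_self).const_mul π).div_const Zg)
        fun u => div_nonneg (mul_nonneg pi_pos.le (hg_nonneg u)) hZg]
    simp_rw [mul_div_right_comm π, intervalIntegral.integral_const_mul]
  · rw [← map_sq_add_sq_withDensity_ofReal_div hg_meas,
      ← map_mahalanobisSq_withDensity_blsDensity g hη₁ hη₂ hσ₁ hσ₂ hρ, ← hT,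
      Measure.map_map measurable_mahalanobisSq (hT₁.prodMk hT₂)]
    rfl

/-- If `(Z₁,Z₂)` has joint density `g (z₁²+z₂²)/Z_g`, then `Z₁² + Z₂²`
has CDF `(π/Z_g) ∫₀^x g` and density `u ↦ π g u / Z_g` on `(0,∞)`; consequently the squared
Mahalanobis distance of a BLS random vector has density `u ↦ π g u / Z_g` on `(0,∞)`. -/
theorem mahalanobis_density
    {Ω : Type*} [MeasurableSpace Ω] (P : Measure Ω) [IsProbabilityMeasure P]
    (g : ℝ → ℝ) (hg_meas : Measurable g) (hg_nonneg : ∀ x, 0 ≤ g x)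
    (hg_pos : 0 < ∫ u in Ioi (0 : ℝ), g u) (hg_int : IntegrableOn g (Ioi 0))
    (Z₁ Z₂ : Ω → ℝ) (hZ₁ : Measurable Z₁) (hZ₂ : Measurable Z₂)
    (hjoint : Measure.map (fun ω => (Z₁ ω, Z₂ ω)) P
      = (volume : Measure (ℝ × ℝ)).withDensity
          (fun z => ENNReal.ofReal
            (g (z.1 ^ 2 + z.2 ^ 2) / (π * ∫ u in Ioi (0 : ℝ), g u))))
    (η₁ η₂ σ₁ σ₂ ρ : ℝ) (hη₁ : 0 < η₁) (hη₂ : 0 < η₂) (hσ₁ : 0 < σ₁) (hσ₂ : 0 < σ₂)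
    (hρ : ρ ∈ Ioo (-1 : ℝ) 1)
    (T₁ T₂ : Ω → ℝ) (hT₁ : Measurable T₁) (hT₂ : Measurable T₂)
    (hT : Measure.map (fun ω => (T₁ ω, T₂ ω)) P
      = (volume : Measure (ℝ × ℝ)).withDensity
          (fun t => ENNReal.ofReal (blsDensity g η₁ η₂ σ₁ σ₂ ρ t))) :
    (∀ x : ℝ, 0 ≤ x →
        P {ω | Z₁ ω ^ 2 + Z₂ ω ^ 2 ≤ x}
          = ENNReal.ofReal ((π / (π * ∫ u in Ioi (0 : ℝ), g u)) *
              ∫ u in (0 : ℝ)..x, g u)) ∧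
    (Measure.map (fun ω => Z₁ ω ^ 2 + Z₂ ω ^ 2) P
      = volume.withDensity (fun u => ENNReal.ofReal
          (if 0 < u then π * g u / (π * ∫ u in Ioi (0 : ℝ), g u) else 0))) ∧
    (Measure.map (fun ω => mahalanobisSq η₁ η₂ σ₁ σ₂ ρ (T₁ ω) (T₂ ω)) P
      = volume.withDensity (fun u => ENNReal.ofReal
          (if 0 < u then π * g u / (π * ∫ u in Ioi (0 : ℝ), g u) else 0))) :=
  mahalanobis_density_general P g hg_meas hg_nonneg hg_int Z₁ Z₂ hZ₁ hZ₂ hjoint η₁ η₂ σ₁ σ₂ ρ hη₁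
    hη₂ hσ₁ hσ₂ hρ T₁ T₂ hT₁ hT₂ hT
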